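/- For any enhanced finite group (G, q), the Gauss sum Σ_{x∈G} exp(πi·q(x)) has absolute value √|G|. -/

import Mathlib

/-- The doubling map `ℚ/ℤ → ℚ/2ℤ` induced by multiplication by `2`. -/
noncomputable def dbl : AddCircle (1 : ℚ) ≃+ AddCircle (2 : ℚ) :=
  AddCircle.equivAddCircle (1 : ℚ) (2 : ℚ) one_ne_zero two_ne_zero

/-!
Write `e(t) = exp(πi t)` on `ℚ/2ℤ`. The refinement property gives
`e(q(z + y)) · conj e(q y) = e(q z) · e(2⟨z, y⟩)`, so
`|Σₓ e(q x)|² = Σ_z e(q z) Σ_y e(2⟨z, y⟩)`. For fixed `z` the inner sum is the sum of the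
character `y ↦ exp(2πi⟨z, y⟩)` of `G`, which is nontrivial unless `z = 0` by nondegeneracy;
hence only `z = 0` survives and the square of the norm is `|G|`.
-/

open Complex ComplexConjugate Finset

lemma periodic_circleExp_pi_mul_ratCast :
    Function.Periodic (fun t : ℚ ↦ Circle.exp (Real.pi * t)) 2 := fun t ↦ by
  simpa [mul_add, mul_comm] using Circle.periodic_exp (Real.pi * t)

noncomputable def circleExpPi : AddChar (AddCircle (2 : ℚ)) Circle where
  toFun := periodic_circleExp_pi_mul_ratCast.lift
  map_zero_eq_one' := by simpa using periodic_circleExp_pi_mul_ratCast.lift_coe 0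
  map_add_eq_mul' a b := by
    induction a using QuotientAddGroup.induction_on
    induction b using QuotientAddGroup.induction_on
    rw [← QuotientAddGroup.mk_add]
    simp only [Function.Periodic.lift_coe, Rat.cast_add, mul_add, Circle.exp_add]

@[simp]
lemma circleExpPi_apply_mk (t : ℚ) : circleExpPi t = Circle.exp (Real.pi * t) := rfl

lemma coe_circleExpPi_apply_mk (t : ℚ) : (circleExpPi t : ℂ) = cexp (Real.pi * I * t) := by
  rw [circleExpPi_apply_mk, Circle.coe_exp]
  push_cast
  ring_nf

lemma circleExpPi_injective : Function.Injective circleExpPi := by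
  refine AddChar.injective_iff.2 fun x hx ↦ ?_
  induction x using QuotientAddGroup.induction_on with | H t => ?_
  obtain ⟨n, hn⟩ := Circle.exp_eq_one.1 hx
  have ht : t = n * 2 := by
    have : (t : ℝ) = n * 2 := mul_left_cancel₀ Real.pi_ne_zero (by rw [hn]; ring)
    exact_mod_cast this
  exact (AddCircle.coe_eq_zero_iff 2).2 ⟨n, by simp [ht]⟩

lemma AddChar.compAddMonoidHom_eq_zero_iff {A B M : Type*} [AddMonoid A] [AddMonoid B] [Monoid M]
    {ψ : AddChar B M} (hψ : Function.Injective ψ) {f : A →+ B} :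
    ψ.compAddMonoidHom f = 0 ↔ f = 0 := by
  have h0 : ψ.compAddMonoidHom (0 : A →+ B) = 0 := by ext; simp
  rw [← h0]
  exact (compAddMonoidHom_injective_right ψ hψ).eq_iff

def AddMonoidHom.mk₂ {M N P : Type*} [AddZeroClass M] [AddZeroClass N] [AddCommGroup P]
    (f : M → N → P) (H1 : ∀ m₁ m₂ n, f (m₁ + m₂) n = f m₁ n + f m₂ n)
    (H2 : ∀ m n₁ n₂, f m (n₁ + n₂) = f m n₁ + f m n₂) : M →+ N →+ P :=
  AddMonoidHom.mk' (fun m ↦ AddMonoidHom.mk' (f m) (H2 m)) fun m₁ m₂ ↦ AddMonoidHom.ext (H1 m₁ m₂)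

theorem norm_sum_eq_sqrt_card_of_polarization {G : Type*} [AddCommGroup G] [Fintype G]
    (e : G → Circle) (β : G → AddChar G ℂ) (hβ : ∀ x, β x = 0 ↔ x = 0)
    (hpol : ∀ x y, (e (x + y) : ℂ) = e x * e y * β x y) :
    ‖∑ x, (e x : ℂ)‖ = √(Fintype.card G) := by
  classical
  have he0 : (e 0 : ℂ) = 1 := by
    have h := hpol 0 0
    rw [add_zero, AddChar.map_zero_eq_one, mul_one] at h
    exact (mul_eq_left₀ (Circle.coe_ne_zero _)).1 h.symm
  have hcharSum : ∀ z, ∑ y, β z y = if z = 0 then (Fintype.card G : ℂ) else 0 := fun z ↦ by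
    simp only [AddChar.sum_eq_ite, hβ]
  have hsq : (∑ x, (e x : ℂ)) * conj (∑ x, (e x : ℂ)) = Fintype.card G := calc
    _ = ∑ y, ∑ z, (e (z + y) : ℂ) * conj (e y : ℂ) := by
      rw [map_sum, sum_mul_sum, sum_comm]
      exact sum_congr rfl fun y _ ↦ (Fintype.sum_equiv (Equiv.addRight y) _ _ fun _ ↦ rfl).symm
    _ = ∑ y, ∑ z, (e z : ℂ) * β z y := by
      refine sum_congr rfl fun y _ ↦ sum_congr rfl fun z _ ↦ ?_
      rw [hpol, mul_right_comm, mul_assoc (e z : ℂ), Complex.mul_conj, Circle.normSq_coe,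
        ofReal_one, mul_one]
    _ = ∑ z, (e z : ℂ) * ∑ y, β z y := by
      rw [sum_comm]
      simp only [mul_sum]
    _ = Fintype.card G := by simp [hcharSum, he0]
  rw [Complex.norm_def, ← Complex.ofReal_inj.1 ((Complex.mul_conj _).symm.trans hsq)]

theorem stmt5_general {G : Type*} [AddCommGroup G] [Fintype G]
    (b : G → G → AddCircle (1 : ℚ))
    (hbil : ∀ x y z : G, b (x + y) z = b x z + b y z)
    (hsym : ∀ x y : G, b x y = b y x)
    (hnd : ∀ x : G, (∀ y : G, b x y = 0) → x = 0)
    (q : G → AddCircle (2 : ℚ))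
    (hq1 : ∀ x y : G, q (x + y) = q x + q y + dbl (b x y))
    (qr : G → ℚ) (hqr : ∀ x : G, ((qr x : ℚ) : AddCircle (2 : ℚ)) = q x) :
    ‖∑ x : G, Complex.exp (Real.pi * Complex.I * (qr x : ℂ))‖ =
      Real.sqrt (Fintype.card G) := by
  let B := AddMonoidHom.mk₂ b hbil fun x y z ↦ by rw [hsym, hbil, hsym y, hsym z]
  have hB : ∀ x, B x = 0 ↔ x = 0 := fun x ↦
    ⟨fun h ↦ hnd x fun y ↦ DFunLike.congr_fun h y, fun h ↦ h ▸ map_zero B⟩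
  -- `exp(2πi ·)` on `ℚ/ℤ`
  let ψ := (Circle.coeHom.compAddChar circleExpPi).compAddMonoidHom dbl.toAddMonoidHom
  have hψ : Function.Injective ψ :=
    Subtype.val_injective.comp (circleExpPi_injective.comp dbl.injective)
  simp only [← coe_circleExpPi_apply_mk, hqr]
  exact norm_sum_eq_sqrt_card_of_polarization (fun x ↦ circleExpPi (q x))
    (fun x ↦ ψ.compAddMonoidHom (B x))
    (fun x ↦ (AddChar.compAddMonoidHom_eq_zero_iff hψ).trans (hB x))
    (fun x y ↦ by simp only [hq1, AddChar.map_add_eq_mul, Circle.coe_mul]; rfl)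

/-- For any enhanced finite group `(G, q)` (finite abelian group with a non-degenerate
symmetric `ℚ/ℤ`-valued pairing and quadratic refinement `q` valued in `ℚ/2ℤ`), the Gauss
sum `Σ_x exp(πi·q(x))` (computed with any rational lift `qr` of `q`) has absolute value
`√|G|`. -/
theorem stmt5 {G : Type*} [AddCommGroup G] [Fintype G]
    (b : G → G → AddCircle (1 : ℚ))
    (hbil : ∀ x y z : G, b (x + y) z = b x z + b y z)
    (hsym : ∀ x y : G, b x y = b y x)
    (hnd : ∀ x : G, (∀ y : G, b x y = 0) → x = 0)
    (q : G → AddCircle (2 : ℚ))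
    (hq1 : ∀ x y : G, q (x + y) = q x + q y + dbl (b x y))
    (hq2 : ∀ (n : ℤ) (x : G), q (n • x) = n ^ 2 • q x)
    (qr : G → ℚ) (hqr : ∀ x : G, ((qr x : ℚ) : AddCircle (2 : ℚ)) = q x) :
    ‖∑ x : G, Complex.exp (Real.pi * Complex.I * (qr x : ℂ))‖ =
      Real.sqrt (Fintype.card G) :=
  stmt5_general b hbil hsym hnd q hq1 qr hqr
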